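/- Let J : P → P̃ = ℝ^{2n+2} be the embedding J(x^0, p_1,…,p_n, x^1,…,x^n) = (p_0 = 1, p_1,…,p_n, x^0, x^1,…,x^n). Then: (i) J*θ̃ = θ, i.e. θ̃(J(m))(DJ v) = θ(m)(v) for all m ∈ P and v ∈ ℝ^{2n+1}; (ii) J*G̃ = G, i.e. ⟨DJ u, G̃(J(m)) DJ v⟩ = ⟨u, G(m) v⟩ for all m, u, v. -/

import Mathlib

/-!
Statement 11: The embedding `J : P → P̃ = ℝ^{2n+2}`,
`J(x^0, p_1,…,p_n, x^1,…,x^n) = (p_0 = 1, p_1,…,p_n, x^0, x^1,…,x^n)`, satisfies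
`J*θ̃ = θ` and `J*G̃ = G`.
-/

abbrev Idx (n : ℕ) : Type := Unit ⊕ (Fin n ⊕ Fin n)
abbrev Pt (n : ℕ) : Type := Idx n → ℝ

/-- Index type for the symplectization `P̃ = ℝ^{2n+2}`, block ordering `(p; x)`. -/
abbrev Idx2 (n : ℕ) : Type := Fin (n + 1) ⊕ Fin (n + 1)
abbrev Pt2 (n : ℕ) : Type := Idx2 n → ℝ

/-- The Mrugala metric `G = [[1, 0, pᵀ], [0, 0ₙ, Iₙ], [p, Iₙ, p pᵀ]]` on `P`. -/
def Gmat (n : ℕ) (m : Pt n) : Matrix (Idx n) (Idx n) ℝ :=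
  Matrix.of fun a b =>
    match a, b with
    | Sum.inl _, Sum.inl _ => 1
    | Sum.inl _, Sum.inr (Sum.inl _) => 0
    | Sum.inl _, Sum.inr (Sum.inr j) => m (Sum.inr (Sum.inl j))
    | Sum.inr (Sum.inl _), Sum.inl _ => 0
    | Sum.inr (Sum.inl _), Sum.inr (Sum.inl _) => 0
    | Sum.inr (Sum.inl i), Sum.inr (Sum.inr j) => if i = j then 1 else 0
    | Sum.inr (Sum.inr i), Sum.inl _ => m (Sum.inr (Sum.inl i))
    | Sum.inr (Sum.inr i), Sum.inr (Sum.inl j) => if i = j then 1 else 0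
    | Sum.inr (Sum.inr i), Sum.inr (Sum.inr j) =>
        m (Sum.inr (Sum.inl i)) * m (Sum.inr (Sum.inl j))

/-- The lifted metric `G̃ = [[0, I], [I, p pᵀ]]` on `P̃`, block ordering `(p; x)`. -/
def Gt (n : ℕ) (m : Pt2 n) : Matrix (Idx2 n) (Idx2 n) ℝ :=
  Matrix.of fun a b =>
    match a, b with
    | Sum.inl _, Sum.inl _ => 0
    | Sum.inl i, Sum.inr j => if i = j then 1 else 0
    | Sum.inr i, Sum.inl j => if i = j then 1 else 0
    | Sum.inr i, Sum.inr j => m (Sum.inl i) * m (Sum.inl j)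

/-- The contact covector on `P`: `θ(m)(v) = v^{x^0} + Σ p_l v^{x^l}`. -/
noncomputable def thetaAp {n : ℕ} (m : Pt n) (v : Pt n) : ℝ :=
  v (Sum.inl ()) + ∑ l, m (Sum.inr (Sum.inl l)) * v (Sum.inr (Sum.inr l))

/-- The 1-form `θ̃ = Σ_{i=0}^n p_i dx^i` on `P̃`. -/
noncomputable def thetaTAp {n : ℕ} (m : Pt2 n) (v : Pt2 n) : ℝ :=
  ∑ i, m (Sum.inl i) * v (Sum.inr i)

/-- The embedding `J : P → P̃` as the affine subspace `p_0 = 1`. -/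
def Jemb {n : ℕ} (m : Pt n) : Pt2 n := fun a =>
  match a with
  | Sum.inl i => (Fin.cons 1 (fun k => m (Sum.inr (Sum.inl k))) : Fin (n + 1) → ℝ) i
  | Sum.inr i => (Fin.cons (m (Sum.inl ())) (fun k => m (Sum.inr (Sum.inr k))) : Fin (n + 1) → ℝ) i

/-- The (constant) derivative `DJ` of the affine embedding `J`. -/
def DJ {n : ℕ} (v : Pt n) : Pt2 n := fun a =>
  match a with
  | Sum.inl i => (Fin.cons 0 (fun k => v (Sum.inr (Sum.inl k))) : Fin (n + 1) → ℝ) i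
  | Sum.inr i => (Fin.cons (v (Sum.inl ())) (fun k => v (Sum.inr (Sum.inr k))) : Fin (n + 1) → ℝ) i

/-!
Both metrics are `θ ⊗ θ` plus the symmetrized pairing `dp ⊙ dx` of momenta with positions:
`G = θ ⊗ θ + Σₗ (dpₗ ⊙ dxˡ)` on `P` and `G̃ = θ̃ ⊗ θ̃ + Σᵢ (dpᵢ ⊙ dxⁱ)` on `P̃`. The embedding `J`
pulls `θ̃` back to `θ` because `p₀ = 1` on its image, and `DJ` has vanishing `p₀`-component, so
the `dp₀ ⊙ dx⁰` term drops out of the pairing and what remains is the pairing on `P`.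
-/

noncomputable def dpdx {n : ℕ} (u v : Pt n) : ℝ :=
  ∑ l, (u (.inr (.inl l)) * v (.inr (.inr l)) + u (.inr (.inr l)) * v (.inr (.inl l)))

noncomputable def dpdxT {n : ℕ} (u v : Pt2 n) : ℝ :=
  ∑ i, (u (.inl i) * v (.inr i) + u (.inr i) * v (.inl i))

theorem thetaTAp_Jemb_DJ {n : ℕ} (m v : Pt n) : thetaTAp (Jemb m) (DJ v) = thetaAp m v := by
  simp [thetaTAp, thetaAp, Jemb, DJ, Fin.sum_univ_succ]

theorem dpdxT_DJ {n : ℕ} (u v : Pt n) : dpdxT (DJ u) (DJ v) = dpdx u v := by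
  simp [dpdxT, dpdx, DJ, Fin.sum_univ_succ]

theorem sum_mul_Gt_mul {n : ℕ} (q u v : Pt2 n) :
    ∑ a, ∑ b, u a * Gt n q a b * v b = thetaTAp q u * thetaTAp q v + dpdxT u v := by
  have theta_sq : thetaTAp q u * thetaTAp q v =
      ∑ i, ∑ j, u (.inr i) * (q (.inl i) * q (.inl j)) * v (.inr j) := by
    rw [thetaTAp, thetaTAp, Finset.sum_mul_sum]
    exact Finset.sum_congr rfl fun _ _ => Finset.sum_congr rfl fun _ _ => by ring
  rw [theta_sq, dpdxT]
  simp only [Fintype.sum_sum_type, Gt, Matrix.of_apply, mul_ite, ite_mul, mul_one, mul_zero,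
    zero_mul, Finset.sum_ite_eq, Finset.mem_univ, if_true, Finset.sum_const_zero,
    Finset.sum_add_distrib, zero_add]
  ring

theorem sum_mul_Gmat_mul {n : ℕ} (m u v : Pt n) :
    ∑ a, ∑ b, u a * Gmat n m a b * v b = thetaAp m u * thetaAp m v + dpdx u v := by
  have momenta_sq : (∑ l, m (.inr (.inl l)) * u (.inr (.inr l))) *
        ∑ l, m (.inr (.inl l)) * v (.inr (.inr l)) =
      ∑ i, ∑ j, u (.inr (.inr i)) * (m (.inr (.inl i)) * m (.inr (.inl j))) * v (.inr (.inr j)) := by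
    rw [Finset.sum_mul_sum]
    exact Finset.sum_congr rfl fun _ _ => Finset.sum_congr rfl fun _ _ => by ring
  rw [thetaAp, thetaAp, add_mul, mul_add, mul_add, momenta_sq, Finset.mul_sum, Finset.sum_mul, dpdx]
  simp only [Fintype.sum_sum_type, Gmat, Matrix.of_apply, mul_ite, ite_mul, mul_one, mul_zero,
    zero_mul, Finset.sum_ite_eq, Finset.mem_univ, if_true, Finset.sum_const_zero,
    Finset.sum_add_distrib, zero_add, Finset.univ_unique, Finset.sum_singleton]
  simp only [mul_comm]
  ring_nf

theorem symplectization_pullbacks (n : ℕ) :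
    (∀ (m : Pt n) (v : Pt n), thetaTAp (Jemb m) (DJ v) = thetaAp m v) ∧
    (∀ (m : Pt n) (u v : Pt n),
      (∑ a, ∑ b, DJ u a * Gt n (Jemb m) a b * DJ v b)
        = ∑ a, ∑ b, u a * Gmat n m a b * v b) := by
  refine ⟨thetaTAp_Jemb_DJ, fun m u v => ?_⟩
  rw [sum_mul_Gt_mul, sum_mul_Gmat_mul, thetaTAp_Jemb_DJ, thetaTAp_Jemb_DJ, dpdxT_DJ]
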